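/- Let φ_u : EuclideanSpace ℝ (Fin n) → ℝ and φ_v : EuclideanSpace ℝ (Fin p) → ℝ be convex, let Ω_u ⊆ EuclideanSpace ℝ (Fin n) and Ω_v ⊆ EuclideanSpace ℝ (Fin p) be nonempty closed convex sets, let H_u be a q × n real matrix, H_v a q × p real matrix, h ∈ EuclideanSpace ℝ (Fin q), and ρ > 0. Assume there exists a saddle point (u*, v*, λ*) with u* ∈ Ω_u, v* ∈ Ω_v of the Lagrangian L₀(u, v, λ) = φ_u(u) + φ_v(v) + ⟨λ, H_u u + H_v v − h⟩, i.e. L₀(u*, v*, λ) ≤ L₀(u*, v*, λ*) ≤ L₀(u, v, λ*) for all u ∈ Ω_u, v ∈ Ω_v, λ. Let sequences u(s) ∈ Ω_u, v(s) ∈ Ω_v, λ(s) satisfy the ADMM recursions: v(s+1) minimizes v ↦ φ_v(v) + (ρ/2)‖H_u (u(s)) + H_v v − h − (1/ρ)λ(s)‖² over Ω_v; u(s+1) minimizes u ↦ φ_u(u) + (ρ/2)‖H_u u + H_v (v(s+1)) − h − (1/ρ)λ(s)‖² over Ω_u; and λ(s+1) = λ(s) − ρ(H_u (u(s+1)) +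 H_v (v(s+1)) − h). Then the equality-constraint residual converges to zero, ‖H_u (u(s)) + H_v (v(s)) − h‖ → 0 as s → ∞, and the objective values converge to the optimal value, φ_u(u(s)) + φ_v(v(s)) → φ_u(u*) + φ_v(v*). -/

import Mathlib

/-!
The argument of Boyd, Parikh, Chu, Peleato and Eckstein (*Distributed optimization and statistical
learning via ADMM*, Appendix A). Both ADMM subproblems are convex, so their minimizers satisfy
variational inequalities. Tested against the saddle point `(u*, v*, λ*)`, these inequalities show
that `V s = ‖ρ⁻¹ (λ s + λ*)‖² + ‖H_u (u s - u*)‖²` drops by at least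
`‖r (s+1)‖² + ‖H_u (u (s+1) - u s)‖²` per step, `r` being the constraint residual; the cross term
this leaves has a sign because the subgradients of `φ_u` at two consecutive `u`-iterates are
monotone. Hence the residual and the `u`-increments are square summable, so they tend to zero,
and `V` stays bounded. The objective gap is squeezed between `-⟪λ*, r⟫` and
`⟪λ, r⟫ + ρ ⟪H_v (v - v*), H_u Δu⟫`, and both tend to zero.
-/

def toEuc (m : ℕ) (v : Fin m → ℝ) : EuclideanSpace ℝ (Fin m) := WithLp.toLp 2 v

open RealInnerProductSpace Filter Topology Asymptotics

theorem nonneg_of_forall_nonneg_add_mul {a b : ℝ} (h : ∀ t, 0 < t → t ≤ 1 → 0 ≤ a + t * b) :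
    0 ≤ a := by
  have hlim : Tendsto (fun t => a + t * b) (𝓝[>] 0) (𝓝 a) :=
    ((continuous_const.add (continuous_id.mul continuous_const)).tendsto' 0 a
      (by simp)).mono_left nhdsWithin_le_nhds
  refine ge_of_tendsto hlim ?_
  filter_upwards [Ioc_mem_nhdsGT one_pos] with t ht using h t ht.1 ht.2

theorem Asymptotics.IsBigO.inner_tendsto_zero {ι F : Type*} [NormedAddCommGroup F]
    [InnerProductSpace ℝ F] {x y : ι → F} {l : Filter ι}
    (hx : x =O[l] (fun _ => (1 : ℝ))) (hy : Tendsto y l (𝓝 0)) :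
    Tendsto (fun i => ⟪x i, y i⟫) l (𝓝 0) :=
  hy.op_zero_isBoundedUnder_le ((isBigO_one_iff ℝ).1 hx) (fun y x => ⟪x, y⟫) fun y x =>
    (norm_inner_le_norm x y).trans_eq (mul_comm _ _)

theorem tendsto_zero_of_norm_sq_le {ι F : Type*} [NormedAddCommGroup F] {x : ι → F} {e : ι → ℝ}
    {l : Filter ι} (he : Tendsto e l (𝓝 0)) (hx : ∀ i, ‖x i‖ ^ 2 ≤ e i) :
    Tendsto x l (𝓝 0) := by
  have hsqrt : Tendsto (fun i => √(e i)) l (𝓝 0) :=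
    (Real.continuous_sqrt.tendsto' 0 0 Real.sqrt_zero).comp he
  exact squeeze_zero_norm (fun i => Real.le_sqrt_of_sq_le (hx i)) hsqrt

theorem tendsto_zero_of_succ_add_le {V e : ℕ → ℝ} (hV : ∀ s, 0 ≤ V s) (he : ∀ s, 0 ≤ e s)
    (hdec : ∀ s, V (s + 1) + e s ≤ V s) : Tendsto e atTop (𝓝 0) := by
  have hsum : ∀ N, ∑ s ∈ Finset.range N, e s ≤ V 0 - V N := by
    intro N
    induction N with
    | zero => simp
    | succ N ih => rw [Finset.sum_range_succ]; linarith [hdec N]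
  refine (summable_of_sum_range_le (c := V 0) he fun N => ?_).tendsto_atTop_zero
  linarith [hsum N, hV N]

variable {E G F : Type*} [NormedAddCommGroup E] [InnerProductSpace ℝ E]
  [NormedAddCommGroup G] [InnerProductSpace ℝ G] [NormedAddCommGroup F] [InnerProductSpace ℝ F]

theorem ConvexOn.inner_nonneg_of_isMinOn_add_sq {f : E → ℝ} {C : Set E} (hf : ConvexOn ℝ C f)
    {A : E →ₗ[ℝ] F} {b : F} {ρ : ℝ} {x : E} (hx : x ∈ C)
    (hmin : IsMinOn (fun w => f w + ρ / 2 * ‖A w + b‖ ^ 2) C x) {w : E} (hw : w ∈ C) :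
    0 ≤ f w - f x + ρ * ⟪A x + b, A w - A x⟫ := by
  refine nonneg_of_forall_nonneg_add_mul (b := ρ / 2 * ‖A w - A x‖ ^ 2) fun t ht0 ht1 => ?_
  have hseg : x + t • (w - x) = (1 - t) • x + t • w := by module
  have hmem : x + t • (w - x) ∈ C := hseg ▸ hf.1 hx hw (by linarith) ht0.le (by ring)
  have hconv : f (x + t • (w - x)) ≤ (1 - t) * f x + t * f w :=
    hseg ▸ hf.2 hx hw (by linarith) ht0.le (by ring)
  have hexpand : ‖A (x + t • (w - x)) + b‖ ^ 2
      = ‖A x + b‖ ^ 2 + 2 * (t * ⟪A x + b, A w - A x⟫) + t ^ 2 * ‖A w - A x‖ ^ 2 := by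
    rw [show A (x + t • (w - x)) + b = (A x + b) + t • (A w - A x) by
        simp only [map_add, map_smul, map_sub]; abel,
      norm_add_sq_real, real_inner_smul_right, norm_smul, Real.norm_eq_abs, mul_pow, sq_abs]
  have hle := isMinOn_iff.mp hmin _ hmem
  simp only [hexpand] at hle
  refine nonneg_of_mul_nonneg_right ?_ ht0
  linarith

theorem eq_zero_of_forall_inner_le {x l₀ : F} (h : ∀ l, ⟪l, x⟫ ≤ ⟪l₀, x⟫) : x = 0 := by
  have hx := h (l₀ + x)
  rw [inner_add_left] at hx
  exact real_inner_self_nonpos.1 (by linarith)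

def lagrangian (f : E → ℝ) (g : G → ℝ) (A : E →ₗ[ℝ] F) (B : G →ₗ[ℝ] F) (c : F) (x : E × G)
    (l : F) : ℝ :=
  f x.1 + g x.2 + ⟪l, A x.1 + B x.2 - c⟫

section SaddlePoint

variable {f : E → ℝ} {g : G → ℝ} {C : Set E} {D : Set G} {A : E →ₗ[ℝ] F} {B : G →ₗ[ℝ] F}
  {c : F} {ustar : E} {vstar : G} {lamstar : F}

theorem IsSaddlePointOn.lagrangian_feasible
    (hP : IsSaddlePointOn (C ×ˢ D) Set.univ (lagrangian f g A B c) (ustar, vstar) lamstar)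
    (hmem : (ustar, vstar) ∈ C ×ˢ D) : A ustar + B vstar = c :=
  sub_eq_zero.1 <| eq_zero_of_forall_inner_le (l₀ := lamstar) fun l => by
    have hl := hP _ hmem l (Set.mem_univ l)
    simp only [lagrangian] at hl
    linarith

theorem IsSaddlePointOn.le_lagrangian
    (hP : IsSaddlePointOn (C ×ˢ D) Set.univ (lagrangian f g A B c) (ustar, vstar) lamstar)
    (hmem : (ustar, vstar) ∈ C ×ˢ D) {x : E × G} (hx : x ∈ C ×ˢ D) :
    f ustar + g vstar ≤ lagrangian f g A B c x lamstar := by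
  simpa [lagrangian, hP.lagrangian_feasible hmem] using hP x hx lamstar (Set.mem_univ _)

end SaddlePoint

structure IsADMMSeq (f : E → ℝ) (g : G → ℝ) (C : Set E) (D : Set G) (A : E →ₗ[ℝ] F)
    (B : G →ₗ[ℝ] F) (c : F) (ρ : ℝ) (u : ℕ → E) (v : ℕ → G) (lam : ℕ → F) : Prop where
  mem_left : ∀ s, u s ∈ C
  mem_right : ∀ s, v s ∈ D
  isMinOn_right : ∀ s,
    IsMinOn (fun w => g w + ρ / 2 * ‖A (u s) + B w - c - (1 / ρ) • lam s‖ ^ 2) D (v (s + 1))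
  isMinOn_left : ∀ s,
    IsMinOn (fun w => f w + ρ / 2 * ‖A w + B (v (s + 1)) - c - (1 / ρ) • lam s‖ ^ 2) C (u (s + 1))
  dual_update : ∀ s, lam (s + 1) = lam s - ρ • (A (u (s + 1)) + B (v (s + 1)) - c)

/-- The dual update subtracts the residual whereas the Lagrangian adds `⟪lam, A u + B v - c⟫`,
so it is `lam s + lamstar`, not `lam s - lamstar`, that measures the dual error. -/
noncomputable def admmLyapunov (A : E →ₗ[ℝ] F) (ρ : ℝ) (ustar : E) (lamstar : F) (u : ℕ → E)
    (lam : ℕ → F) (s : ℕ) : ℝ :=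
  ‖ρ⁻¹ • (lam s + lamstar)‖ ^ 2 + ‖A (u s) - A ustar‖ ^ 2

theorem admmLyapunov_nonneg {A : E →ₗ[ℝ] F} {ρ : ℝ} {ustar : E} {lamstar : F} {u : ℕ → E}
    {lam : ℕ → F} (s : ℕ) : 0 ≤ admmLyapunov A ρ ustar lamstar u lam s := by
  unfold admmLyapunov; positivity

namespace IsADMMSeq

variable {f : E → ℝ} {g : G → ℝ} {C : Set E} {D : Set G} {A : E →ₗ[ℝ] F} {B : G →ₗ[ℝ] F}
  {c : F} {ρ : ℝ} {u : ℕ → E} {v : ℕ → G} {lam : ℕ → F} {ustar : E} {vstar : G} {lamstar : F}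

theorem inner_dual_le_left (hS : IsADMMSeq f g C D A B c ρ u v lam) (hf : ConvexOn ℝ C f)
    (hρ : ρ ≠ 0) (s : ℕ) {w : E} (hw : w ∈ C) :
    ⟪lam (s + 1), A w - A (u (s + 1))⟫ ≤ f w - f (u (s + 1)) := by
  have hmin : IsMinOn (fun w => f w + ρ / 2 * ‖A w + (B (v (s + 1)) - c - (1 / ρ) • lam s)‖ ^ 2)
      C (u (s + 1)) := by
    simpa only [add_sub_assoc] using hS.isMinOn_left s
  have hgrad : ρ • (A (u (s + 1)) + (B (v (s + 1)) - c - (1 / ρ) • lam s)) = -lam (s + 1) := by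
    rw [hS.dual_update s, one_div, smul_add, smul_sub, smul_inv_smul₀ hρ]
    module
  have h := hf.inner_nonneg_of_isMinOn_add_sq (hS.mem_left _) hmin hw
  rw [← real_inner_smul_left, hgrad, inner_neg_left] at h
  linarith

theorem inner_dual_le_right (hS : IsADMMSeq f g C D A B c ρ u v lam) (hg : ConvexOn ℝ D g)
    (hρ : ρ ≠ 0) (s : ℕ) {w : G} (hw : w ∈ D) :
    ⟪lam (s + 1) + ρ • (A (u (s + 1)) - A (u s)), B w - B (v (s + 1))⟫ ≤ g w - g (v (s + 1)) := by
  have hshape : ∀ w, A (u s) + B w - c - (1 / ρ) • lam s = B w + (A (u s) - c - (1 / ρ) • lam s) :=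
    fun w => by abel
  have hmin : IsMinOn (fun w => g w + ρ / 2 * ‖B w + (A (u s) - c - (1 / ρ) • lam s)‖ ^ 2)
      D (v (s + 1)) := by
    simpa only [hshape] using hS.isMinOn_right s
  have hgrad : ρ • (B (v (s + 1)) + (A (u s) - c - (1 / ρ) • lam s))
      = -(lam (s + 1) + ρ • (A (u (s + 1)) - A (u s))) := by
    rw [hS.dual_update s, one_div, smul_add, smul_sub, smul_inv_smul₀ hρ]
    module
  have h := hg.inner_nonneg_of_isMinOn_add_sq (hS.mem_right _) hmin hw
  rw [← real_inner_smul_left, hgrad, inner_neg_left] at h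
  linarith

theorem inner_residual_le_zero (hS : IsADMMSeq f g C D A B c ρ u v lam) (hf : ConvexOn ℝ C f)
    (hρ : 0 < ρ) (s : ℕ) :
    ⟪A (u (s + 2)) + B (v (s + 2)) - c, A (u (s + 2)) - A (u (s + 1))⟫ ≤ 0 := by
  have h₁ := hS.inner_dual_le_left hf hρ.ne' s (hS.mem_left (s + 2))
  have h₂ := hS.inner_dual_le_left hf hρ.ne' (s + 1) (hS.mem_left (s + 1))
  have hlam : lam (s + 1) = lam (s + 2) + ρ • (A (u (s + 2)) + B (v (s + 2)) - c) := by
    rw [hS.dual_update (s + 1)]; abel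
  have hsum : ⟪lam (s + 1), A (u (s + 2)) - A (u (s + 1))⟫
      + ⟪lam (s + 2), A (u (s + 1)) - A (u (s + 2))⟫
      = ρ * ⟪A (u (s + 2)) + B (v (s + 2)) - c, A (u (s + 2)) - A (u (s + 1))⟫ := by
    rw [← neg_sub (A (u (s + 2))), inner_neg_right, hlam, inner_add_left, real_inner_smul_left]
    ring
  exact nonpos_of_mul_nonpos_right (by linarith) hρ

theorem objective_sub_le (hS : IsADMMSeq f g C D A B c ρ u v lam) (hf : ConvexOn ℝ C f)
    (hg : ConvexOn ℝ D g) (hρ : ρ ≠ 0) (hustar : ustar ∈ C)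
    (hvstar : vstar ∈ D) (hfeas : A ustar + B vstar = c) (s : ℕ) :
    f (u (s + 1)) + g (v (s + 1)) - (f ustar + g vstar)
      ≤ ⟪lam (s + 1), A (u (s + 1)) + B (v (s + 1)) - c⟫
        + ρ * ⟪B (v (s + 1)) - B vstar, A (u (s + 1)) - A (u s)⟫ := by
  have h₁ := hS.inner_dual_le_left hf hρ s hustar
  have h₂ := hS.inner_dual_le_right hg hρ s hvstar
  have hres : A (u (s + 1)) + B (v (s + 1)) - c
      = -((A ustar - A (u (s + 1))) + (B vstar - B (v (s + 1)))) := by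
    rw [← hfeas]; abel
  rw [inner_add_left, real_inner_smul_left] at h₂
  rw [hres, ← neg_sub (B vstar), inner_neg_right, inner_neg_left, inner_add_right,
    real_inner_comm (A (u (s + 1)) - A (u s))]
  linarith

theorem lyapunov_succ_le (hS : IsADMMSeq f g C D A B c ρ u v lam) (hf : ConvexOn ℝ C f)
    (hg : ConvexOn ℝ D g) (hρ : 0 < ρ)
    (hP : IsSaddlePointOn (C ×ˢ D) Set.univ (lagrangian f g A B c) (ustar, vstar) lamstar)
    (hmem : (ustar, vstar) ∈ C ×ˢ D) (s : ℕ) :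
    admmLyapunov A ρ ustar lamstar u lam (s + 1) + ‖A (u (s + 1)) + B (v (s + 1)) - c‖ ^ 2
        + ‖A (u (s + 1)) - A (u s)‖ ^ 2
      ≤ admmLyapunov A ρ ustar lamstar u lam s
        + 2 * ⟪A (u (s + 1)) + B (v (s + 1)) - c, A (u (s + 1)) - A (u s)⟫ := by
  have hfeas := hP.lagrangian_feasible hmem
  have hlower :=
    hP.le_lagrangian hmem (Set.mk_mem_prod (hS.mem_left (s + 1)) (hS.mem_right (s + 1)))
  have hupper := hS.objective_sub_le hf hg hρ.ne' hmem.1 hmem.2 hfeas s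
  simp only [lagrangian] at hlower
  have hdual : ρ⁻¹ • (lam s + lamstar)
      = ρ⁻¹ • (lam (s + 1) + lamstar) + (A (u (s + 1)) + B (v (s + 1)) - c) := by
    rw [hS.dual_update s, sub_add_eq_add_sub, smul_sub, inv_smul_smul₀ hρ.ne']
    abel
  have hprimal : A (u s) - A ustar = (A (u (s + 1)) - A ustar) - (A (u (s + 1)) - A (u s)) := by
    abel
  unfold admmLyapunov
  rw [hdual, hprimal]
  set r := A (u (s + 1)) + B (v (s + 1)) - c
  set Δ := A (u (s + 1)) - A (u s)
  set W := ρ⁻¹ • (lam (s + 1) + lamstar)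
  set a := A (u (s + 1)) - A ustar
  have hBv : B (v (s + 1)) - B vstar = r - a := by
    simp only [r, a, ← hfeas]; abel
  have hWr : ⟪lam (s + 1), r⟫ + ⟪lamstar, r⟫ = ρ * ⟪W, r⟫ := by
    rw [real_inner_smul_left, inner_add_left]
    field_simp
  have hkey : 0 ≤ ρ * (⟪W, r⟫ + ⟪r - a, Δ⟫) := by
    rw [hBv] at hupper
    linarith
  have hkey' := nonneg_of_mul_nonneg_right hkey hρ
  rw [norm_add_sq_real, norm_sub_sq_real a Δ]
  rw [inner_sub_left] at hkey'
  linarith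

theorem lyapunov_succ_succ_add_le (hS : IsADMMSeq f g C D A B c ρ u v lam)
    (hf : ConvexOn ℝ C f) (hg : ConvexOn ℝ D g) (hρ : 0 < ρ)
    (hP : IsSaddlePointOn (C ×ˢ D) Set.univ (lagrangian f g A B c) (ustar, vstar) lamstar)
    (hmem : (ustar, vstar) ∈ C ×ˢ D) (s : ℕ) :
    admmLyapunov A ρ ustar lamstar u lam (s + 2)
        + (‖A (u (s + 2)) + B (v (s + 2)) - c‖ ^ 2 + ‖A (u (s + 2)) - A (u (s + 1))‖ ^ 2)
      ≤ admmLyapunov A ρ ustar lamstar u lam (s + 1) := by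
  linarith [hS.lyapunov_succ_le hf hg hρ hP hmem (s + 1),
    hS.inner_residual_le_zero hf hρ s]

theorem tendsto_residual (hS : IsADMMSeq f g C D A B c ρ u v lam) (hf : ConvexOn ℝ C f)
    (hg : ConvexOn ℝ D g) (hρ : 0 < ρ)
    (hP : IsSaddlePointOn (C ×ˢ D) Set.univ (lagrangian f g A B c) (ustar, vstar) lamstar)
    (hmem : (ustar, vstar) ∈ C ×ˢ D) :
    Tendsto (fun s => A (u s) + B (v s) - c) atTop (𝓝 0) ∧
      Tendsto (fun s => A (u (s + 1)) - A (u s)) atTop (𝓝 0) := by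
  have he := tendsto_zero_of_succ_add_le (fun s => admmLyapunov_nonneg (s + 1))
    (fun s => by positivity) (hS.lyapunov_succ_succ_add_le hf hg hρ hP hmem)
  exact ⟨(tendsto_add_atTop_iff_nat 2).1 <| tendsto_zero_of_norm_sq_le he fun s =>
      le_add_of_nonneg_right (sq_nonneg _),
    (tendsto_add_atTop_iff_nat 1).1 <| tendsto_zero_of_norm_sq_le he fun s =>
      le_add_of_nonneg_left (sq_nonneg _)⟩

theorem exists_lyapunov_le (hS : IsADMMSeq f g C D A B c ρ u v lam) (hf : ConvexOn ℝ C f)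
    (hg : ConvexOn ℝ D g) (hρ : 0 < ρ)
    (hP : IsSaddlePointOn (C ×ˢ D) Set.univ (lagrangian f g A B c) (ustar, vstar) lamstar)
    (hmem : (ustar, vstar) ∈ C ×ˢ D) :
    ∃ M, ∀ s, admmLyapunov A ρ ustar lamstar u lam s ≤ M := by
  set V := admmLyapunov A ρ ustar lamstar u lam
  have hanti : Antitone fun s => V (s + 1) := antitone_nat_of_succ_le fun s => by
    have := hS.lyapunov_succ_succ_add_le hf hg hρ hP hmem s
    linarith [sq_nonneg ‖A (u (s + 2)) + B (v (s + 2)) - c‖,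
      sq_nonneg ‖A (u (s + 2)) - A (u (s + 1))‖]
  refine ⟨max (V 0) (V 1), fun s => ?_⟩
  rcases s with _ | s
  · exact le_max_left _ _
  · exact (hanti s.zero_le).trans (le_max_right _ _)

theorem isBigO_one (hS : IsADMMSeq f g C D A B c ρ u v lam) (hf : ConvexOn ℝ C f)
    (hg : ConvexOn ℝ D g) (hρ : 0 < ρ)
    (hP : IsSaddlePointOn (C ×ˢ D) Set.univ (lagrangian f g A B c) (ustar, vstar) lamstar)
    (hmem : (ustar, vstar) ∈ C ×ˢ D) :
    (fun s => ρ⁻¹ • (lam s + lamstar)) =O[atTop] (fun _ => (1 : ℝ)) ∧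
      (fun s => A (u s) - A ustar) =O[atTop] (fun _ => (1 : ℝ)) := by
  obtain ⟨M, hM⟩ := hS.exists_lyapunov_le hf hg hρ hP hmem
  exact ⟨isBigO_one_nat_atTop_iff.2 ⟨√M, fun s => Real.le_sqrt_of_sq_le <|
      (le_add_of_nonneg_right (sq_nonneg _)).trans (hM s)⟩,
    isBigO_one_nat_atTop_iff.2 ⟨√M, fun s => Real.le_sqrt_of_sq_le <|
      (le_add_of_nonneg_left (sq_nonneg _)).trans (hM s)⟩⟩

theorem tendsto_objective (hS : IsADMMSeq f g C D A B c ρ u v lam) (hf : ConvexOn ℝ C f)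
    (hg : ConvexOn ℝ D g) (hρ : 0 < ρ)
    (hP : IsSaddlePointOn (C ×ˢ D) Set.univ (lagrangian f g A B c) (ustar, vstar) lamstar)
    (hmem : (ustar, vstar) ∈ C ×ˢ D) :
    Tendsto (fun s => f (u s) + g (v s)) atTop (𝓝 (f ustar + g vstar)) := by
  have hfeas := hP.lagrangian_feasible hmem
  obtain ⟨hres, hstep⟩ := hS.tendsto_residual hf hg hρ hP hmem
  obtain ⟨hdual, hprimal⟩ := hS.isBigO_one hf hg hρ hP hmem
  have hlam : lam =O[atTop] (fun _ => (1 : ℝ)) :=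
    ((hdual.const_smul_left ρ).sub (isBigO_const_one ℝ lamstar atTop)).congr_left fun s => by
      simp [smul_smul, hρ.ne']
  have hBv : (fun s => B (v s) - B vstar) =O[atTop] (fun _ => (1 : ℝ)) :=
    ((hres.isBigO_one ℝ).sub hprimal).congr_left fun s => by rw [← hfeas]; abel
  have hshift := tendsto_add_atTop_nat 1
  have hlower : Tendsto (fun s => -⟪lamstar, A (u (s + 1)) + B (v (s + 1)) - c⟫) atTop (𝓝 0) := by
    simpa using ((tendsto_const_nhds (x := lamstar)).inner (𝕜 := ℝ) (hres.comp hshift)).neg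
  have hupper : Tendsto (fun s => ⟪lam (s + 1), A (u (s + 1)) + B (v (s + 1)) - c⟫
      + ρ * ⟪B (v (s + 1)) - B vstar, A (u (s + 1)) - A (u s)⟫) atTop (𝓝 0) := by
    simpa using ((hlam.comp_tendsto hshift).inner_tendsto_zero (hres.comp hshift)).add
      (((hBv.comp_tendsto hshift).inner_tendsto_zero hstep).const_mul ρ)
  refine (tendsto_add_atTop_iff_nat 1).1 (tendsto_sub_nhds_zero_iff.1 ?_)
  refine tendsto_of_tendsto_of_tendsto_of_le_of_le hlower hupper (fun s => ?_)
    (hS.objective_sub_le hf hg hρ.ne' hmem.1 hmem.2 hfeas)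
  have hlag :=
    hP.le_lagrangian hmem (Set.mk_mem_prod (hS.mem_left (s + 1)) (hS.mem_right (s + 1)))
  simp only [lagrangian] at hlag
  linarith

end IsADMMSeq

theorem stmt_13_general (n p q : ℕ) (ρ : ℝ) (hρ : 0 < ρ)
    (φu : EuclideanSpace ℝ (Fin n) → ℝ) (φv : EuclideanSpace ℝ (Fin p) → ℝ)
    (hφu : ConvexOn ℝ Set.univ φu) (hφv : ConvexOn ℝ Set.univ φv)
    (Ωu : Set (EuclideanSpace ℝ (Fin n))) (Ωv : Set (EuclideanSpace ℝ (Fin p)))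
    (hΩucv : Convex ℝ Ωu)
    (hΩvcv : Convex ℝ Ωv)
    (Hu : Matrix (Fin q) (Fin n) ℝ) (Hv : Matrix (Fin q) (Fin p) ℝ)
    (h : EuclideanSpace ℝ (Fin q))
    (L0 : EuclideanSpace ℝ (Fin n) → EuclideanSpace ℝ (Fin p) →
      EuclideanSpace ℝ (Fin q) → ℝ)
    (hL0 : ∀ u v lam, L0 u v lam =
      φu u + φv v + @inner ℝ _ _ lam (toEuc q (Hu.mulVec u) + toEuc q (Hv.mulVec v) - h))
    (ustar : EuclideanSpace ℝ (Fin n)) (vstar : EuclideanSpace ℝ (Fin p))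
    (lamstar : EuclideanSpace ℝ (Fin q))
    (hustar : ustar ∈ Ωu) (hvstar : vstar ∈ Ωv)
    (hsaddle₁ : ∀ lam : EuclideanSpace ℝ (Fin q), L0 ustar vstar lam ≤ L0 ustar vstar lamstar)
    (hsaddle₂ : ∀ u ∈ Ωu, ∀ v ∈ Ωv, L0 ustar vstar lamstar ≤ L0 u v lamstar)
    (u : ℕ → EuclideanSpace ℝ (Fin n)) (v : ℕ → EuclideanSpace ℝ (Fin p))
    (lam : ℕ → EuclideanSpace ℝ (Fin q))
    (hu : ∀ s, u s ∈ Ωu) (hv : ∀ s, v s ∈ Ωv)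
    (hvupd : ∀ s, ∀ w ∈ Ωv,
      φv (v (s + 1)) + ρ / 2 *
        ‖toEuc q (Hu.mulVec (u s)) + toEuc q (Hv.mulVec (v (s + 1))) - h - (1 / ρ) • lam s‖ ^ 2
      ≤ φv w + ρ / 2 *
        ‖toEuc q (Hu.mulVec (u s)) + toEuc q (Hv.mulVec w) - h - (1 / ρ) • lam s‖ ^ 2)
    (huupd : ∀ s, ∀ w ∈ Ωu,
      φu (u (s + 1)) + ρ / 2 *
        ‖toEuc q (Hu.mulVec (u (s + 1))) + toEuc q (Hv.mulVec (v (s + 1))) - h - (1 / ρ) • lam s‖ ^ 2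
      ≤ φu w + ρ / 2 *
        ‖toEuc q (Hu.mulVec w) + toEuc q (Hv.mulVec (v (s + 1))) - h - (1 / ρ) • lam s‖ ^ 2)
    (hlamupd : ∀ s, lam (s + 1) =
      lam s - ρ • (toEuc q (Hu.mulVec (u (s + 1))) + toEuc q (Hv.mulVec (v (s + 1))) - h)) :
    Filter.Tendsto
      (fun s => ‖toEuc q (Hu.mulVec (u s)) + toEuc q (Hv.mulVec (v s)) - h‖)
      Filter.atTop (nhds 0) ∧
    Filter.Tendsto (fun s => φu (u s) + φv (v s))
      Filter.atTop (nhds (φu ustar + φv vstar)) := by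
  set A := Matrix.toLpLin 2 2 Hu
  set B := Matrix.toLpLin 2 2 Hv
  -- `A x` unfolds to `toEuc q (Hu.mulVec x)`, so the hypotheses transfer by definitional unfolding.
  have hL : ∀ x y l, L0 x y l = lagrangian φu φv A B h (x, y) l := hL0
  have hP : IsSaddlePointOn (Ωu ×ˢ Ωv) Set.univ (lagrangian φu φv A B h) (ustar, vstar) lamstar :=
    fun x hx l _ => by simpa only [hL] using (hsaddle₁ l).trans (hsaddle₂ x.1 hx.1 x.2 hx.2)
  have hS : IsADMMSeq φu φv Ωu Ωv A B h ρ u v lam :=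
    ⟨hu, hv, fun s => isMinOn_iff.2 (hvupd s), fun s => isMinOn_iff.2 (huupd s), hlamupd⟩
  have hφu' := hφu.subset (Set.subset_univ _) hΩucv
  have hφv' := hφv.subset (Set.subset_univ _) hΩvcv
  exact ⟨tendsto_zero_iff_norm_tendsto_zero.1
      (hS.tendsto_residual hφu' hφv' hρ hP ⟨hustar, hvstar⟩).1,
    hS.tendsto_objective hφu' hφv' hρ hP ⟨hustar, hvstar⟩⟩

/-- Proposition 5 of the paper (ADMM convergence): if the Lagrangian of the problem
`min φ_u(u) + φ_v(v) s.t. H_u u + H_v v = h, u ∈ Ω_u, v ∈ Ω_v` admits a saddle point,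
then the ADMM iterates drive the equality-constraint residual to zero and the objective
values to the optimal value. -/
theorem stmt_13 (n p q : ℕ) (ρ : ℝ) (hρ : 0 < ρ)
    (φu : EuclideanSpace ℝ (Fin n) → ℝ) (φv : EuclideanSpace ℝ (Fin p) → ℝ)
    (hφu : ConvexOn ℝ Set.univ φu) (hφv : ConvexOn ℝ Set.univ φv)
    (Ωu : Set (EuclideanSpace ℝ (Fin n))) (Ωv : Set (EuclideanSpace ℝ (Fin p)))
    (hΩune : Ωu.Nonempty) (hΩucl : IsClosed Ωu) (hΩucv : Convex ℝ Ωu)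
    (hΩvne : Ωv.Nonempty) (hΩvcl : IsClosed Ωv) (hΩvcv : Convex ℝ Ωv)
    (Hu : Matrix (Fin q) (Fin n) ℝ) (Hv : Matrix (Fin q) (Fin p) ℝ)
    (h : EuclideanSpace ℝ (Fin q))
    (L0 : EuclideanSpace ℝ (Fin n) → EuclideanSpace ℝ (Fin p) →
      EuclideanSpace ℝ (Fin q) → ℝ)
    (hL0 : ∀ u v lam, L0 u v lam =
      φu u + φv v + @inner ℝ _ _ lam (toEuc q (Hu.mulVec u) + toEuc q (Hv.mulVec v) - h))
    (ustar : EuclideanSpace ℝ (Fin n)) (vstar : EuclideanSpace ℝ (Fin p))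
    (lamstar : EuclideanSpace ℝ (Fin q))
    (hustar : ustar ∈ Ωu) (hvstar : vstar ∈ Ωv)
    (hsaddle₁ : ∀ lam : EuclideanSpace ℝ (Fin q), L0 ustar vstar lam ≤ L0 ustar vstar lamstar)
    (hsaddle₂ : ∀ u ∈ Ωu, ∀ v ∈ Ωv, L0 ustar vstar lamstar ≤ L0 u v lamstar)
    (u : ℕ → EuclideanSpace ℝ (Fin n)) (v : ℕ → EuclideanSpace ℝ (Fin p))
    (lam : ℕ → EuclideanSpace ℝ (Fin q))
    (hu : ∀ s, u s ∈ Ωu) (hv : ∀ s, v s ∈ Ωv)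
    (hvupd : ∀ s, ∀ w ∈ Ωv,
      φv (v (s + 1)) + ρ / 2 *
        ‖toEuc q (Hu.mulVec (u s)) + toEuc q (Hv.mulVec (v (s + 1))) - h - (1 / ρ) • lam s‖ ^ 2
      ≤ φv w + ρ / 2 *
        ‖toEuc q (Hu.mulVec (u s)) + toEuc q (Hv.mulVec w) - h - (1 / ρ) • lam s‖ ^ 2)
    (huupd : ∀ s, ∀ w ∈ Ωu,
      φu (u (s + 1)) + ρ / 2 *
        ‖toEuc q (Hu.mulVec (u (s + 1))) + toEuc q (Hv.mulVec (v (s + 1))) - h - (1 / ρ) • lam s‖ ^ 2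
      ≤ φu w + ρ / 2 *
        ‖toEuc q (Hu.mulVec w) + toEuc q (Hv.mulVec (v (s + 1))) - h - (1 / ρ) • lam s‖ ^ 2)
    (hlamupd : ∀ s, lam (s + 1) =
      lam s - ρ • (toEuc q (Hu.mulVec (u (s + 1))) + toEuc q (Hv.mulVec (v (s + 1))) - h)) :
    Filter.Tendsto
      (fun s => ‖toEuc q (Hu.mulVec (u s)) + toEuc q (Hv.mulVec (v s)) - h‖)
      Filter.atTop (nhds 0) ∧
    Filter.Tendsto (fun s => φu (u s) + φv (v s))
      Filter.atTop (nhds (φu ustar + φv vstar)) :=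
  stmt_13_general n p q ρ hρ φu φv hφu hφv Ωu Ωv hΩucv hΩvcv Hu Hv h L0 hL0 ustar vstar lamstar
    hustar hvstar hsaddle₁ hsaddle₂ u v lam hu hv hvupd huupd hlamupd
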